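/- Let C be a linear code over F_q of length t·n with minimum Hamming distance d, closed under the simultaneous cyclic shift on each of its t blocks of length n (a quasi-cyclic code of index t generated by a single generator g(x) = ([g f_0], ..., [g f_{t−1}]) with g | x^n − 1), and let f_l(x), f_r(x) satisfy gcd(f_l + α f_r, (x^n−1)/g) = 1 for all α in F_q, with deg(f_l f_r) ≥ 1. Then the code generated by (g(x) f_l(x) | g(x) f_r(x)) — i.e., all pairs (c·f_l | c·f_r) for codewords c of C, with polynomial multiplication applied blockwise modulo x^n − 1 — has minimum symplectic distance at least ⌈(q+1)d/q⌉. -/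

import Mathlib

open Polynomial Finset

/-! The `q + 1` codewords `c·(f_l + α f_r)` (α ∈ F) and `c·f_r` all lie in the original code and are
nonzero, because `f_l + α f_r` and `f_r` are units modulo `(xⁿ - 1)/g`; so each has Hamming weight
at least `d`. At a position where `(u_i, v_i) ≠ (0, 0)`, exactly `q` of the `q + 1` vectors
`u + α v`, `v` are nonzero, so their weights add up to `q · w_s(u | v)`, whence `(q + 1) d ≤ q · w_s`. -/

section SymplecticWeight

variable {ι F : Type*} [Fintype ι] [Field F] [Fintype F] [DecidableEq F]

def symplecticWeight (u v : ι → F) : ℕ := #{i | u i ≠ 0 ∨ v i ≠ 0}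

theorem card_add_mul_ne_zero_add_ite (x y : F) :
    #{α : F | x + α * y ≠ 0} + (if y ≠ 0 then 1 else 0) =
      if x ≠ 0 ∨ y ≠ 0 then Fintype.card F else 0 := by
  by_cases hy : y = 0
  · by_cases hx : x = 0 <;> simp [hx, hy]
  · have hroot : ({α : F | x + α * y ≠ 0} : Finset F) = univ.erase (-x / y) := by
      ext α
      simp [eq_div_iff hy, add_eq_zero_iff_eq_neg']
    have hq : 0 < Fintype.card F := Fintype.card_pos
    rw [hroot, card_erase_of_mem (mem_univ _), card_univ, if_pos hy, if_pos (Or.inr hy)]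
    omega

theorem sum_hammingNorm_add_smul_add_hammingNorm (u v : ι → F) :
    ∑ α : F, hammingNorm (u + α • v) + hammingNorm v =
      Fintype.card F * symplecticWeight u v := by
  simp only [hammingNorm, symplecticWeight, card_filter, Pi.add_apply, Pi.smul_apply, smul_eq_mul]
  rw [sum_comm, ← sum_add_distrib, mul_sum]
  refine sum_congr rfl fun i _ => ?_
  rw [← card_filter, card_add_mul_ne_zero_add_ite, mul_ite, mul_one, mul_zero]

theorem card_add_one_mul_le_card_mul_symplecticWeight {u v : ι → F} {d : ℕ}
    (hline : ∀ α : F, d ≤ hammingNorm (u + α • v)) (hv : d ≤ hammingNorm v) :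
    (Fintype.card F + 1) * d ≤ Fintype.card F * symplecticWeight u v := by
  have hsum : Fintype.card F * d ≤ ∑ α : F, hammingNorm (u + α • v) := by
    simpa using card_nsmul_le_sum univ _ d fun α _ => hline α
  linarith [sum_hammingNorm_add_smul_add_hammingNorm u v]

end SymplecticWeight

theorem dvd_of_dvd_mul_right_of_isCoprime_div {R : Type*} [EuclideanDomain R] {M g b y : R}
    (hg : g ∣ M) (hb : IsCoprime b (M / g)) (hy : g ∣ y) (h : M ∣ y * b) : M ∣ y := by
  obtain ⟨k, rfl⟩ := hg
  obtain ⟨z, rfl⟩ := hy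
  rcases eq_or_ne g 0 with rfl | hg0
  · simp
  rw [mul_div_cancel_left₀ _ hg0] at hb
  rw [mul_assoc] at h
  exact mul_dvd_mul_left g (hb.symm.dvd_of_dvd_mul_right ((mul_dvd_mul_iff_left hg0).1 h))

section BlockCoeffs

variable {F : Type*} [Field F] {t : ℕ}

noncomputable def blockCoeffs (n : ℕ) (c : Fin t → F[X]) : Fin t × Fin n → F :=
  fun p => (c p.1 % (X ^ n - 1)).coeff p.2

theorem blockCoeffs_add_C_mul (n : ℕ) (c e : Fin t → F[X]) (α : F) :
    blockCoeffs n (fun j => c j + C α * e j) = blockCoeffs n c + α • blockCoeffs n e := by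
  ext p
  have hsmul : (α • e p.1) % (X ^ n - 1) = α • (e p.1 % (X ^ n - 1)) := smul_modByMonic _ _
  rw [Pi.add_apply, Pi.smul_apply, blockCoeffs, add_mod, coeff_add, ← smul_eq_C_mul, hsmul,
    coeff_smul]
  rfl

end BlockCoeffs

theorem qc_double_symplectic_bound_general {F : Type*} [Field F] [Fintype F] [DecidableEq F]
    {n t : ℕ} (g : F[X]) (hg : g ∣ X ^ n - 1)
    (f : Fin t → F[X]) (fl fr : F[X]) (d : ℕ)
    (hmin : ∀ a : F[X], (∃ j, (a * g * f j) % (X ^ n - 1) ≠ 0) →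
      d ≤ (univ.filter fun p : Fin t × Fin n =>
            ((a * g * f p.1) % (X ^ n - 1)).coeff (p.2 : ℕ) ≠ 0).card)
    (hcop : ∀ α : F, IsCoprime (fl + C α * fr) ((X ^ n - 1) / g))
    (hcopr : IsCoprime fr ((X ^ n - 1) / g)) :
    ∀ a : F[X],
      (∃ j, (a * g * f j * fl) % (X ^ n - 1) ≠ 0 ∨ (a * g * f j * fr) % (X ^ n - 1) ≠ 0) →
      ((Fintype.card F + 1) * d + Fintype.card F - 1) / Fintype.card F ≤
        (univ.filter fun p : Fin t × Fin n =>
          ((a * g * f p.1 * fl) % (X ^ n - 1)).coeff (p.2 : ℕ) ≠ 0 ∨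
          ((a * g * f p.1 * fr) % (X ^ n - 1)).coeff (p.2 : ℕ) ≠ 0).card := by
  intro a ⟨j, hj⟩
  have hweight : ∀ b, IsCoprime b ((X ^ n - 1) / g) →
      d ≤ hammingNorm (blockCoeffs n fun j => a * g * f j * b) := by
    intro b hb
    have hreorder : (fun j => a * g * f j * b) = fun j => a * b * g * f j := by funext; ring
    have hne : a * g * f j * b % (X ^ n - 1) ≠ 0 := by
      intro h0
      have hdvd := dvd_of_dvd_mul_right_of_isCoprime_div hg hb
        (dvd_mul_of_dvd_left (dvd_mul_left g a) _) (EuclideanDomain.mod_eq_zero.1 h0)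
      rcases hj with hj | hj <;> exact hj (EuclideanDomain.mod_eq_zero.2 (hdvd.mul_right _))
    rw [hreorder]
    exact hmin (a * b) ⟨j, congrFun hreorder j ▸ hne⟩
  have hline : ∀ α : F, d ≤ hammingNorm (blockCoeffs n (fun j => a * g * f j * fl) +
      α • blockCoeffs n fun j => a * g * f j * fr) := by
    intro α
    rw [← blockCoeffs_add_C_mul]
    convert hweight _ (hcop α) using 4
    ring
  rw [← Nat.ceilDiv_eq_add_pred_div, ceilDiv_le_iff_le_mul Fintype.card_pos]
  exact card_add_one_mul_le_card_mul_symplecticWeight hline (hweight fr hcopr)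

/-- Theorem 2: let C be the 1-generator quasi-cyclic code of index t generated by
([g f₀], ..., [g f_{t−1}]) with minimum Hamming distance d, and let f_l, f_r
satisfy gcd(f_l + α f_r, (x^n−1)/g) = 1 for all α ∈ F_q, gcd(f_r, (x^n−1)/g) = 1,
deg(f_l f_r) ≥ 1. Then the code of all pairs (c·f_l | c·f_r), c ∈ C (blockwise
multiplication mod x^n − 1), has minimum symplectic distance ≥ ⌈(q+1)d/q⌉. -/
theorem qc_double_symplectic_bound {F : Type*} [Field F] [Fintype F] [DecidableEq F]
    {n t : ℕ} (hn : 0 < n) (g : F[X]) (hg : g ∣ X ^ n - 1)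
    (f : Fin t → F[X]) (fl fr : F[X]) (d : ℕ)
    (hmin : ∀ a : F[X], (∃ j, (a * g * f j) % (X ^ n - 1) ≠ 0) →
      d ≤ (univ.filter fun p : Fin t × Fin n =>
            ((a * g * f p.1) % (X ^ n - 1)).coeff (p.2 : ℕ) ≠ 0).card)
    (hcop : ∀ α : F, IsCoprime (fl + C α * fr) ((X ^ n - 1) / g))
    (hcopr : IsCoprime fr ((X ^ n - 1) / g))
    (hdeg : 1 ≤ (fl * fr).natDegree) :
    ∀ a : F[X],
      (∃ j, (a * g * f j * fl) % (X ^ n - 1) ≠ 0 ∨ (a * g * f j * fr) % (X ^ n - 1) ≠ 0) →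
      ((Fintype.card F + 1) * d + Fintype.card F - 1) / Fintype.card F ≤
        (univ.filter fun p : Fin t × Fin n =>
          ((a * g * f p.1 * fl) % (X ^ n - 1)).coeff (p.2 : ℕ) ≠ 0 ∨
          ((a * g * f p.1 * fr) % (X ^ n - 1)).coeff (p.2 : ℕ) ≠ 0).card :=
  qc_double_symplectic_bound_general g hg f fl fr d hmin hcop hcopr
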